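/- (Entrywise form of the main theorem, case j = 0.) Let q be a complex number with |q| < 1. Then for every integer i ≥ 0: ∑_{n=0}^{∞} ((q^8;q^{16})_n / (q^{16};q^{16})_n) · q^{4n} · q^{(4n+1)(4i+1)} = (∑_{n=0}^{∞} q^{(2n+1)^2}) · ((q^8;q^{16})_i / (q^{16};q^{16})_i) · q^{4i}. -/

import Mathlib

open Finset

/-- The finite q-Pochhammer symbol `(a;Q)_n = (1-a)(1-aQ)⋯(1-aQ^{n-1})`. -/
noncomputable def qPoch (a Q : ℂ) (n : ℕ) : ℂ :=
  ∏ i ∈ Finset.range n, (1 - a * Q ^ i)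

section Aux
open Filter

lemma qPoch_zero (a Q : ℂ) : qPoch a Q 0 = 1 := by simp [qPoch]

lemma qPoch_succ (a Q : ℂ) (n : ℕ) :
    qPoch a Q (n + 1) = qPoch a Q n * (1 - a * Q ^ n) := Finset.prod_range_succ _ _

lemma qPoch_succ' (a Q : ℂ) (n : ℕ) :
    qPoch a Q (n + 1) = (1 - a) * qPoch (a * Q) Q n := by
  rw [qPoch, Finset.prod_range_succ']
  rw [mul_comm]
  simp only [pow_zero, mul_one]
  congr 1
  refine Finset.prod_congr rfl fun i _ => ?_
  ring_nf

lemma one_sub_ne {w : ℂ} (h : ‖w‖ < 1) : (1 : ℂ) - w ≠ 0 := by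
  intro hc
  have : w = 1 := by linear_combination -hc
  rw [this] at h; simp at h

lemma qPoch_ne_zero {a Q : ℂ} (ha : ‖a‖ < 1) (hQ : ‖Q‖ ≤ 1) (n : ℕ) :
    qPoch a Q n ≠ 0 := by
  refine Finset.prod_ne_zero_iff.2 fun i _ => one_sub_ne ?_
  calc ‖a * Q ^ i‖ = ‖a‖ * ‖Q‖ ^ i := by rw [norm_mul, norm_pow]
  _ ≤ ‖a‖ * 1 := by
      refine mul_le_mul_of_nonneg_left (pow_le_one₀ (norm_nonneg _) hQ) (norm_nonneg _)
  _ < 1 := by simpa using ha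

/-- workhorse summability -/
lemma summable_norm_gen {u v Q z : ℂ} (hQ : ‖Q‖ < 1) (hv : ‖v‖ < 1) (hz : ‖z‖ < 1) :
    Summable fun n => ‖z ^ n * qPoch u Q n / qPoch v Q n‖ := by
  set ε : ℝ := (1 - ‖z‖) / 4 with hε
  have hε0 : 0 < ε := by rw [hε]; linarith
  have hQ0 : Tendsto (fun n => ‖Q‖ ^ n) atTop (nhds 0) :=
    tendsto_pow_atTop_nhds_zero_of_lt_one (norm_nonneg _) hQ
  have hu : ∀ᶠ n in atTop, ‖u‖ * ‖Q‖ ^ n ≤ ε := by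
    have := hQ0.eventually (gt_mem_nhds (show (0:ℝ) < ε / (‖u‖ + 1) by positivity))
    filter_upwards [this] with n hn
    have h1 : ‖u‖ * ‖Q‖ ^ n ≤ (‖u‖ + 1) * (ε / (‖u‖ + 1)) := by
      apply mul_le_mul (by linarith) hn.le (by positivity) (by positivity)
    have h2 : (‖u‖ + 1) * (ε / (‖u‖ + 1)) = ε := by
      field_simp
    linarith
  have hvv : ∀ᶠ n in atTop, ‖v‖ * ‖Q‖ ^ n ≤ ε := by
    have := hQ0.eventually (gt_mem_nhds (show (0:ℝ) < ε / (‖v‖ + 1) by positivity))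
    filter_upwards [this] with n hn
    have h1 : ‖v‖ * ‖Q‖ ^ n ≤ (‖v‖ + 1) * (ε / (‖v‖ + 1)) := by
      apply mul_le_mul (by linarith) hn.le (by positivity) (by positivity)
    have h2 : (‖v‖ + 1) * (ε / (‖v‖ + 1)) = ε := by field_simp
    linarith
  have hε1 : ε < 1 := by
    have : 0 ≤ ‖z‖ := norm_nonneg _
    rw [hε]; linarith
  apply summable_of_ratio_norm_eventually_le (r := (1 + ‖z‖) / 2)
  · linarith
  · filter_upwards [hu, hvv] with n hun hvn
    have hvQn : ‖v * Q ^ n‖ < 1 := by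
      rw [norm_mul, norm_pow]; linarith
    have hd1 : qPoch v Q n ≠ 0 := qPoch_ne_zero hv hQ.le n
    have hd2 : (1 : ℂ) - v * Q ^ n ≠ 0 := one_sub_ne hvQn
    have key : z ^ (n+1) * qPoch u Q (n+1) / qPoch v Q (n+1)
        = (z ^ n * qPoch u Q n / qPoch v Q n) * (z * (1 - u * Q ^ n) / (1 - v * Q ^ n)) := by
      rw [qPoch_succ, qPoch_succ]
      field_simp
      ring
    rw [norm_norm, norm_norm, key, norm_mul]
    have hb : ‖z * (1 - u * Q ^ n) / (1 - v * Q ^ n)‖ ≤ (1 + ‖z‖) / 2 := by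
      rw [norm_div, norm_mul, div_le_iff₀ (norm_pos_iff.mpr hd2)]
      have h1 : ‖(1:ℂ) - u * Q ^ n‖ ≤ 1 + ε := by
        calc ‖(1:ℂ) - u * Q ^ n‖ ≤ ‖(1:ℂ)‖ + ‖u * Q ^ n‖ := norm_sub_le _ _
        _ ≤ 1 + ε := by rw [norm_one, norm_mul, norm_pow]; linarith
      have h2 : (1:ℝ) - ε ≤ ‖(1:ℂ) - v * Q ^ n‖ := by
        have := norm_sub_norm_le (1 : ℂ) (v * Q ^ n)
        rw [norm_one, norm_mul, norm_pow] at this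
        linarith
      have h3 : ‖z‖ * (1 + ε) ≤ (1 + ‖z‖) / 2 * (1 - ε) := by
        have hz0 : 0 ≤ ‖z‖ := norm_nonneg _
        rw [hε]; nlinarith
      calc ‖z‖ * ‖(1:ℂ) - u * Q ^ n‖ ≤ ‖z‖ * (1 + ε) := by
            exact mul_le_mul_of_nonneg_left h1 (norm_nonneg _)
      _ ≤ (1 + ‖z‖) / 2 * (1 - ε) := h3
      _ ≤ (1 + ‖z‖) / 2 * ‖(1:ℂ) - v * Q ^ n‖ := by
            refine mul_le_mul_of_nonneg_left h2 (by positivity)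
    calc ‖z ^ n * qPoch u Q n / qPoch v Q n‖ * ‖z * (1 - u * Q ^ n) / (1 - v * Q ^ n)‖
        ≤ ‖z ^ n * qPoch u Q n / qPoch v Q n‖ * ((1 + ‖z‖)/2) := by
          exact mul_le_mul_of_nonneg_left hb (norm_nonneg _)
    _ = (1 + ‖z‖) / 2 * ‖z ^ n * qPoch u Q n / qPoch v Q n‖ := by ring

lemma summable_gen {u v Q z : ℂ} (hQ : ‖Q‖ < 1) (hv : ‖v‖ < 1) (hz : ‖z‖ < 1) :
    Summable fun n => z ^ n * qPoch u Q n / qPoch v Q n :=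
  (summable_norm_gen hQ hv hz).of_norm

lemma tsum_telescope {A : ℕ → ℂ} (hA : Summable A) : ∑' n, (A n - A (n + 1)) = A 0 := by
  have h1 : Summable fun n => A n - A (n + 1) :=
    hA.sub ((summable_nat_add_iff 1).2 hA)
  have h0 : Tendsto A atTop (nhds 0) := hA.tendsto_atTop_zero
  have h2 : Tendsto (fun n => ∑ i ∈ range n, (A i - A (i + 1))) atTop (nhds (A 0)) := by
    have : (fun n => ∑ i ∈ range n, (A i - A (i + 1))) = fun n => A 0 - A n := by
      funext n; exact Finset.sum_range_sub' A n
    rw [this]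
    simpa using tendsto_const_nhds.sub h0
  exact ((h1.hasSum_iff_tendsto_nat).2 h2).tsum_eq

section Step
variable {t x : ℂ}

lemma step_term (ht : ‖t‖ < 1) (hx : ‖x‖ < 1) (n : ℕ) :
    x ^ n * qPoch x (t^2) n / qPoch (x*t) (t^2) n
      - x^2*t*((x*t^2) ^ n * qPoch (x*t^2) (t^2) n / qPoch (x*t^2*t) (t^2) n)
    = (x ^ n * qPoch x (t^2) n / qPoch (x*t) (t^2) n) * (1 - x^2*(t^2)^n) / (1-x)
      - (x ^ (n+1) * qPoch x (t^2) (n+1) / qPoch (x*t) (t^2) (n+1)) * (1 - x^2*(t^2)^(n+1)) / (1-x) := by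
  have hQ1 : ‖t^2‖ ≤ 1 := by
    rw [norm_pow]; exact pow_le_one₀ (norm_nonneg _) ht.le
  have hxt : ‖x*t‖ < 1 := by
    rw [norm_mul]
    calc ‖x‖ * ‖t‖ ≤ ‖x‖ * 1 := mul_le_mul_of_nonneg_left ht.le (norm_nonneg _)
    _ < 1 := by simpa using hx
  have h1 : (1:ℂ) - x ≠ 0 := one_sub_ne hx
  have h2 : (1:ℂ) - x*t ≠ 0 := one_sub_ne hxt
  have h3 : (1:ℂ) - x*t*(t^2)^n ≠ 0 := by
    refine one_sub_ne ?_
    rw [norm_mul]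
    calc ‖x*t‖ * ‖(t^2)^n‖ ≤ ‖x*t‖ * 1 := by
          refine mul_le_mul_of_nonneg_left ?_ (norm_nonneg _)
          rw [norm_pow]; exact pow_le_one₀ (norm_nonneg _) hQ1
    _ < 1 := by simpa using hxt
  have hD : qPoch (x*t) (t^2) n ≠ 0 := qPoch_ne_zero hxt hQ1 n
  -- express shifted pochhammers
  have f1 : qPoch (x*(t^2)) (t^2) n = qPoch x (t^2) n * (1 - x*(t^2)^n) / (1-x) := by
    have := (qPoch_succ' x (t^2) n).symm.trans (qPoch_succ x (t^2) n)
    field_simp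
    linear_combination this
  have f2 : qPoch (x*t*(t^2)) (t^2) n = qPoch (x*t) (t^2) n * (1 - x*t*(t^2)^n) / (1-x*t) := by
    have := (qPoch_succ' (x*t) (t^2) n).symm.trans (qPoch_succ (x*t) (t^2) n)
    rw [eq_div_iff h2]
    linear_combination this
  have e1 : x*t^2 = x*(t^2) := by ring
  have e2 : x*t^2*t = x*t*(t^2) := by ring
  rw [e1, e2, f1, f2, qPoch_succ, qPoch_succ]
  generalize qPoch x (t^2) n = A at *
  generalize qPoch (x*t) (t^2) n = D at *
  rw [mul_pow x (t^2) n, pow_succ (t^2) n]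
  generalize (t^2)^n = T at *
  field_simp
  ring
end Step
lemma norm_mul_lt_one {x t : ℂ} (hx : ‖x‖ < 1) (ht : ‖t‖ ≤ 1) : ‖x * t‖ < 1 := by
  rw [norm_mul]
  calc ‖x‖ * ‖t‖ ≤ ‖x‖ * 1 := mul_le_mul_of_nonneg_left ht (norm_nonneg _)
  _ < 1 := by simpa using hx

lemma step {t x : ℂ} (ht : ‖t‖ < 1) (hx : ‖x‖ < 1) :
    ∑' n, x ^ n * qPoch x (t^2) n / qPoch (x*t) (t^2) n
    = 1 + x + x^2*t* ∑' n, (x*t^2) ^ n * qPoch (x*t^2) (t^2) n / qPoch (x*t^2*t) (t^2) n := by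
  have hQ1 : ‖t^2‖ ≤ 1 := by rw [norm_pow]; exact pow_le_one₀ (norm_nonneg _) ht.le
  have hQ : ‖t^2‖ < 1 := by
    rw [norm_pow]; exact pow_lt_one₀ (norm_nonneg _) ht (by norm_num)
  have hxt : ‖x*t‖ < 1 := norm_mul_lt_one hx ht.le
  have hxQ : ‖x*t^2‖ < 1 := norm_mul_lt_one hx hQ1
  have hxQt : ‖x*t^2*t‖ < 1 := norm_mul_lt_one hxQ ht.le
  have h1 : (1:ℂ) - x ≠ 0 := one_sub_ne hx
  have S1 : Summable fun n => x ^ n * qPoch x (t^2) n / qPoch (x*t) (t^2) n :=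
    summable_gen hQ hxt hx
  have S2 : Summable fun n => (x*t^2) ^ n * qPoch (x*t^2) (t^2) n / qPoch (x*t^2*t) (t^2) n :=
    summable_gen hQ hxQt hxQ
  have Sg2 : Summable fun n => (x*t^2) ^ n * qPoch x (t^2) n / qPoch (x*t) (t^2) n :=
    summable_gen hQ hxt hxQ
  set G : ℕ → ℂ := fun n =>
    (x ^ n * qPoch x (t^2) n / qPoch (x*t) (t^2) n) * (1 - x^2*(t^2)^n) / (1-x) with hG
  have SG : Summable G := by
    refine Summable.congr (((S1.sub (Sg2.mul_left (x^2))).div_const (1-x))) fun n => ?_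
    rw [hG]
    have hD : qPoch (x*t) (t^2) n ≠ 0 := qPoch_ne_zero hxt hQ1 n
    field_simp
    ring
  have key : ∑' n, (x ^ n * qPoch x (t^2) n / qPoch (x*t) (t^2) n
      - x^2*t*((x*t^2) ^ n * qPoch (x*t^2) (t^2) n / qPoch (x*t^2*t) (t^2) n))
      = 1 + x := by
    have h2 : ∑' n, (x ^ n * qPoch x (t^2) n / qPoch (x*t) (t^2) n
        - x^2*t*((x*t^2) ^ n * qPoch (x*t^2) (t^2) n / qPoch (x*t^2*t) (t^2) n))
        = ∑' n, (G n - G (n+1)) := by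
      refine tsum_congr fun n => ?_
      rw [hG]
      simpa using step_term ht hx n
    rw [h2, tsum_telescope SG, hG]
    simp [qPoch_zero]
    field_simp
    ring
  have hsplit : ∑' n, (x ^ n * qPoch x (t^2) n / qPoch (x*t) (t^2) n
      - x^2*t*((x*t^2) ^ n * qPoch (x*t^2) (t^2) n / qPoch (x*t^2*t) (t^2) n))
      = (∑' n, x ^ n * qPoch x (t^2) n / qPoch (x*t) (t^2) n)
        - x^2*t* ∑' n, (x*t^2) ^ n * qPoch (x*t^2) (t^2) n / qPoch (x*t^2*t) (t^2) n := by
    rw [Summable.tsum_sub S1 (S2.mul_left (x^2*t))]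
    rw [tsum_mul_left]
  rw [hsplit] at key
  linear_combination key
lemma term_bound {t x : ℂ} (ht : ‖t‖ ≤ 1) (hx : ‖x‖ ≤ 1/5) (n : ℕ) :
    ‖x ^ n * qPoch x (t^2) n / qPoch (x*t) (t^2) n‖ ≤ (3/10) ^ n := by
  have hQ1 : ‖t^2‖ ≤ 1 := by rw [norm_pow]; exact pow_le_one₀ (norm_nonneg _) ht
  have hnum : ‖x ^ n * qPoch x (t^2) n‖ ≤ (1/5)^n * (6/5)^n := by
    rw [norm_mul, norm_pow]
    refine mul_le_mul (pow_le_pow_left₀ (norm_nonneg _) hx n) ?_ (norm_nonneg _) (by positivity)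
    rw [qPoch, norm_prod]
    calc ∏ i ∈ range n, ‖1 - x * (t^2)^i‖ ≤ ∏ i ∈ range n, (6/5 : ℝ) := by
          refine Finset.prod_le_prod (fun i _ => norm_nonneg _) fun i _ => ?_
          calc ‖1 - x * (t^2)^i‖ ≤ ‖(1:ℂ)‖ + ‖x * (t^2)^i‖ := norm_sub_le _ _
          _ ≤ 1 + 1/5 := by
                rw [norm_one, norm_mul, norm_pow]
                have h5 : ‖x‖ * ‖t^2‖^i ≤ (1/5) * 1 :=
                  mul_le_mul hx (pow_le_one₀ (norm_nonneg _) hQ1) (by positivity) (by norm_num)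
                linarith
          _ = 6/5 := by norm_num
    _ = (6/5 : ℝ)^n := by rw [Finset.prod_const, Finset.card_range]
  have hden : (4/5:ℝ)^n ≤ ‖qPoch (x*t) (t^2) n‖ := by
    rw [qPoch, norm_prod]
    calc (4/5:ℝ)^n = ∏ i ∈ range n, (4/5 : ℝ) := by
          rw [Finset.prod_const, Finset.card_range]
    _ ≤ ∏ i ∈ range n, ‖1 - x*t * (t^2)^i‖ := by
          refine Finset.prod_le_prod (fun i _ => by norm_num) fun i _ => ?_
          have hb : ‖x*t*(t^2)^i‖ ≤ 1/5 := by
            rw [norm_mul, norm_mul, norm_pow]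
            calc ‖x‖ * ‖t‖ * ‖t^2‖^i ≤ (1/5) * 1 * 1 := by
                  refine mul_le_mul (mul_le_mul hx ht (norm_nonneg _) (by norm_num)) ?_ (by positivity) (by norm_num)
                  exact pow_le_one₀ (norm_nonneg _) hQ1
            _ = 1/5 := by norm_num
          have := norm_sub_norm_le (1:ℂ) (x*t*(t^2)^i)
          rw [norm_one] at this
          linarith
  calc ‖x ^ n * qPoch x (t^2) n / qPoch (x*t) (t^2) n‖
      = ‖x ^ n * qPoch x (t^2) n‖ / ‖qPoch (x*t) (t^2) n‖ := norm_div _ _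
  _ ≤ ((1/5)^n * (6/5)^n) / (4/5)^n := by
        exact div_le_div₀ (by positivity) hnum (by positivity) hden
  _ = (3/10) ^ n := by
        rw [← mul_pow, ← div_pow]; norm_num

lemma W_bound {t x : ℂ} (ht : ‖t‖ ≤ 1) (hx : ‖x‖ ≤ 1/5) :
    ‖∑' n, x ^ n * qPoch x (t^2) n / qPoch (x*t) (t^2) n‖ ≤ 2 := by
  have h := tsum_of_norm_bounded (hasSum_geometric_of_lt_one (by norm_num) (by norm_num : (3/10:ℝ) < 1))
    (term_bound ht hx)
  calc ‖∑' n, x ^ n * qPoch x (t^2) n / qPoch (x*t) (t^2) n‖ ≤ (1 - 3/10 : ℝ)⁻¹ := h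
  _ ≤ 2 := by norm_num
lemma le_E (k : ℕ) : k ≤ k*(k+1)/2 := by
  rcases k with _|k
  · simp
  · rw [Nat.le_div_iff_mul_le (by norm_num)]
    exact Nat.mul_le_mul_left _ (by omega)

lemma E1 (m : ℕ) : 2*m*(2*m+1)/2 = m*(2*m+1) := by
  rw [show 2*m*(2*m+1) = 2*(m*(2*m+1)) by ring]
  exact Nat.mul_div_cancel_left _ (by norm_num)

lemma E2 (m : ℕ) : (2*m+1)*(2*m+1+1)/2 = (2*m+1)*(m+1) := by
  rw [show (2*m+1)*(2*m+1+1) = 2*((2*m+1)*(m+1)) by ring]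
  exact Nat.mul_div_cancel_left _ (by norm_num)

lemma theta_summable {t : ℂ} (ht : ‖t‖ < 1) : Summable fun k : ℕ => t^(k*(k+1)/2) := by
  refine Summable.of_norm_bounded (g := fun k => ‖t‖^k)
    (summable_geometric_of_lt_one (norm_nonneg _) ht) fun k => ?_
  rw [norm_pow]
  exact pow_le_pow_of_le_one (norm_nonneg _) ht.le (le_E k)

lemma gauss {t : ℂ} (ht : ‖t‖ < 1) :
    ∑' n, t ^ n * qPoch t (t^2) n / qPoch (t^2) (t^2) n = ∑' k : ℕ, t^(k*(k+1)/2) := by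
  have key : ∀ m, ∑' n, t ^ n * qPoch t (t^2) n / qPoch (t^2) (t^2) n
      = (∑ k ∈ range (2*m), t^(k*(k+1)/2))
        + t^(m*(2*m+1)) * ∑' n, (t^(2*m+1)) ^ n * qPoch (t^(2*m+1)) (t^2) n / qPoch (t^(2*m+2)) (t^2) n := by
    intro m
    induction m with
    | zero => norm_num
    | succ m ih =>
      rw [ih]
      have hx : ‖t^(2*m+1)‖ < 1 := by
        rw [norm_pow]; exact pow_lt_one₀ (norm_nonneg _) ht (by omega)
      have hs := step ht hx
      have r1 : t^(2*m+1)*t^2 = t^(2*m+3) := by ring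
      have r2 : t^(2*m+1)*t^2*t = t^(2*m+4) := by ring
      have r3 : t^(2*m+1)*t = t^(2*m+2) := by ring
      rw [r2, r1, r3] at hs
      rw [show 2*(m+1) = 2*m+1+1 by ring, Finset.sum_range_succ, Finset.sum_range_succ,
        E1, E2, hs]
      rw [show 2*m+1+1+1 = 2*m+3 by omega, show 2*m+1+1+2 = 2*m+4 by omega]
      ring
  have h2m : Tendsto (fun m : ℕ => 2*m) atTop atTop :=
    Filter.tendsto_atTop_atTop.2 fun b => ⟨b, fun a ha => by omega⟩
  have hth := theta_summable ht
  have hA : Tendsto (fun m => ∑ k ∈ range (2*m), t^(k*(k+1)/2)) atTop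
      (nhds (∑' k : ℕ, t^(k*(k+1)/2))) := hth.hasSum.tendsto_sum_nat.comp h2m
  have hpow : Tendsto (fun n : ℕ => ‖t‖^n) atTop (nhds 0) :=
    tendsto_pow_atTop_nhds_zero_of_lt_one (norm_nonneg _) ht
  have h2m1 : Tendsto (fun m : ℕ => 2*m+1) atTop atTop :=
    Filter.tendsto_atTop_atTop.2 fun b => ⟨b, fun a ha => by omega⟩
  have hev : ∀ᶠ m : ℕ in atTop, ‖t‖^(2*m+1) < 1/5 :=
    (hpow.comp h2m1).eventually (gt_mem_nhds (by norm_num))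
  have hB : Tendsto (fun m => t^(m*(2*m+1)) *
      ∑' n, (t^(2*m+1)) ^ n * qPoch (t^(2*m+1)) (t^2) n / qPoch (t^(2*m+2)) (t^2) n) atTop
      (nhds 0) := by
    apply squeeze_zero_norm' (a := fun m => ‖t‖^m * 2)
    · filter_upwards [hev] with m hm
      have h15 : ‖t^(2*m+1)‖ ≤ 1/5 := by rw [norm_pow]; exact hm.le
      have hWb := W_bound (t := t) (x := t^(2*m+1)) ht.le h15
      have r3 : t^(2*m+1)*t = t^(2*m+2) := by ring
      rw [r3] at hWb
      rw [norm_mul, norm_pow]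
      refine mul_le_mul ?_ hWb (norm_nonneg _) (by positivity)
      exact pow_le_pow_of_le_one (norm_nonneg _) ht.le (Nat.le_mul_of_pos_right m (by omega))
    · simpa using hpow.mul_const 2
  have h2 := hA.add hB
  rw [add_zero] at h2
  have h3 : (fun m => (∑ k ∈ range (2*m), t^(k*(k+1)/2)) + t^(m*(2*m+1)) *
      ∑' n, (t^(2*m+1)) ^ n * qPoch (t^(2*m+1)) (t^2) n / qPoch (t^(2*m+2)) (t^2) n)
      = fun _ => ∑' n, t ^ n * qPoch t (t^2) n / qPoch (t^2) (t^2) n := by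
    funext m; rw [← key m]
  rw [h3] at h2
  exact tendsto_nhds_unique tendsto_const_nhds h2
lemma funeq_term {t Q z : ℂ} (hQ : ‖Q‖ < 1) (n : ℕ) :
    ((z^n * qPoch t Q n / qPoch Q Q n - (Q*z)^n * qPoch t Q n / qPoch Q Q n)
      - z*(z^n * qPoch t Q n / qPoch Q Q n - t*((Q*z)^n * qPoch t Q n / qPoch Q Q n)))
    = (z^n * qPoch t Q n / qPoch Q Q n - (Q*z)^n * qPoch t Q n / qPoch Q Q n)
      - (z^(n+1) * qPoch t Q (n+1) / qPoch Q Q (n+1)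
          - (Q*z)^(n+1) * qPoch t Q (n+1) / qPoch Q Q (n+1)) := by
  have hD : qPoch Q Q n ≠ 0 := qPoch_ne_zero hQ hQ.le n
  have h1 : (1:ℂ) - Q*Q^n ≠ 0 := by
    refine one_sub_ne ?_
    rw [norm_mul]
    calc ‖Q‖ * ‖Q^n‖ ≤ ‖Q‖ * 1 := by
          refine mul_le_mul_of_nonneg_left ?_ (norm_nonneg _)
          rw [norm_pow]; exact pow_le_one₀ (norm_nonneg _) hQ.le
    _ < 1 := by simpa using hQ
  rw [qPoch_succ, qPoch_succ]
  field_simp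
  ring

lemma funeq {t Q z : ℂ} (hQ : ‖Q‖ < 1) (hz : ‖z‖ < 1) :
    (1-z) * ∑' n, z^n * qPoch t Q n / qPoch Q Q n
    = (1-t*z) * ∑' n, (Q*z)^n * qPoch t Q n / qPoch Q Q n := by
  have hQz : ‖Q*z‖ < 1 := norm_mul_lt_one hQ hz.le
  have Sf : Summable fun n => z^n * qPoch t Q n / qPoch Q Q n := summable_gen hQ hQ hz
  have Sh : Summable fun n => (Q*z)^n * qPoch t Q n / qPoch Q Q n := summable_gen hQ hQ hQz
  have SA : Summable fun n => z^n * qPoch t Q n / qPoch Q Q n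
      - (Q*z)^n * qPoch t Q n / qPoch Q Q n := Sf.sub Sh
  have ht1 := tsum_telescope SA
  have h0 : z^0 * qPoch t Q 0 / qPoch Q Q 0 - (Q*z)^0 * qPoch t Q 0 / qPoch Q Q 0 = 0 := by
    simp [qPoch_zero]
  rw [h0] at ht1
  have h2 : ∑' n, ((z^n * qPoch t Q n / qPoch Q Q n - (Q*z)^n * qPoch t Q n / qPoch Q Q n)
      - z*(z^n * qPoch t Q n / qPoch Q Q n - t*((Q*z)^n * qPoch t Q n / qPoch Q Q n))) = 0 := by
    rw [tsum_congr (funeq_term hQ)]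
    exact ht1
  rw [Summable.tsum_sub SA ((Sf.sub (Sh.mul_left t)).mul_left z), Summable.tsum_sub Sf Sh,
    tsum_mul_left, Summable.tsum_sub Sf (Sh.mul_left t), tsum_mul_left] at h2
  linear_combination h2

theorem entrywise_main_theorem_j_zero' (q : ℂ) (hq : ‖q‖ < 1) (i : ℕ) :
    ∑' n : ℕ,
        qPoch (q ^ 8) (q ^ 16) n / qPoch (q ^ 16) (q ^ 16) n * q ^ (4 * n) *
          q ^ ((4 * n + 1) * (4 * i + 1)) =
      (∑' n : ℕ, q ^ ((2 * n + 1) ^ 2)) *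
        (qPoch (q ^ 8) (q ^ 16) i / qPoch (q ^ 16) (q ^ 16) i) * q ^ (4 * i) := by
  have ht : ‖q^8‖ < 1 := by
    rw [norm_pow]; exact pow_lt_one₀ (norm_nonneg _) hq (by norm_num)
  have hQ : ‖q^16‖ < 1 := by
    rw [norm_pow]; exact pow_lt_one₀ (norm_nonneg _) hq (by norm_num)
  have hQ1 : ‖q^16‖ ≤ 1 := hQ.le
  have claim : ∀ j : ℕ, ∑' n, (q^8*(q^16)^j)^n * qPoch (q^8) (q^16) n / qPoch (q^16) (q^16) n
      = (∑' k : ℕ, (q^8)^(k*(k+1)/2)) * (qPoch (q^8) (q^16) j / qPoch (q^16) (q^16) j) := by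
    intro j
    induction j with
    | zero =>
      have hg := gauss (t := q^8) ht
      rw [show ((q:ℂ)^8)^2 = q^16 by ring] at hg
      simpa [qPoch_zero] using hg
    | succ j ih =>
      have hzj : ‖q^8*(q^16)^j‖ < 1 := by
        refine norm_mul_lt_one ht ?_
        rw [norm_pow]; exact pow_le_one₀ (norm_nonneg _) hQ1
      have hfe := funeq (t := q^8) (Q := q^16) hQ hzj
      rw [show (q:ℂ)^16*(q^8*(q^16)^j) = q^8*(q^16)^(j+1) by ring] at hfe
      rw [ih] at hfe
      have hb : (1:ℂ) - q^16*(q^16)^j ≠ 0 := by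
        refine one_sub_ne ?_
        refine norm_mul_lt_one hQ ?_
        rw [norm_pow]; exact pow_le_one₀ (norm_nonneg _) hQ1
      have hDj : qPoch (q^16) (q^16) j ≠ 0 := qPoch_ne_zero hQ hQ1 j
      rw [qPoch_succ, qPoch_succ]
      have h8 : (q:ℂ)^8*(q^8*(q^16)^j) = q^16*(q^16)^j := by ring
      rw [h8] at hfe
      field_simp at hfe ⊢
      linear_combination -hfe
  have lhs_eq : ∑' n : ℕ,
      qPoch (q ^ 8) (q ^ 16) n / qPoch (q ^ 16) (q ^ 16) n * q ^ (4 * n) *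
        q ^ ((4 * n + 1) * (4 * i + 1))
      = q^(4*i+1) * ∑' n, (q^8*(q^16)^i)^n * qPoch (q^8) (q^16) n / qPoch (q^16) (q^16) n := by
    rw [← tsum_mul_left]
    refine tsum_congr fun n => ?_
    have e1 : 4*n + (4*n+1)*(4*i+1) = (4*i+1) + (8+16*i)*n := by ring
    have e2 : (q:ℂ) ^ (4*n) * q ^ ((4*n+1)*(4*i+1)) = q^(4*i+1) * (q^(8+16*i))^n := by
      rw [← pow_add, e1, pow_add, pow_mul]
    have e3 : (q:ℂ)^(8+16*i) = q^8*(q^16)^i := by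
      rw [pow_add, pow_mul]
    calc qPoch (q ^ 8) (q ^ 16) n / qPoch (q ^ 16) (q ^ 16) n * q ^ (4 * n) *
          q ^ ((4 * n + 1) * (4 * i + 1))
        = qPoch (q ^ 8) (q ^ 16) n / qPoch (q ^ 16) (q ^ 16) n * (q ^ (4*n) * q ^ ((4*n+1)*(4*i+1))) := by ring
    _ = qPoch (q ^ 8) (q ^ 16) n / qPoch (q ^ 16) (q ^ 16) n * (q^(4*i+1) * (q^(8+16*i))^n) := by rw [e2]
    _ = q^(4*i+1) * ((q^8*(q^16)^i)^n * qPoch (q^8) (q^16) n / qPoch (q^16) (q^16) n) := by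
          rw [e3]; ring
  have theta_eq : (∑' n : ℕ, q ^ ((2 * n + 1) ^ 2)) = q * ∑' k : ℕ, (q^8)^(k*(k+1)/2) := by
    rw [← tsum_mul_left]
    refine tsum_congr fun n => ?_
    have hdvd : n*(n+1)/2*2 = n*(n+1) := Nat.div_mul_cancel (Nat.even_mul_succ_self n).two_dvd
    have e4 : (2*n+1)^2 = 1 + 8*(n*(n+1)/2) := by
      have : (2*n+1)^2 = 1 + 4*(n*(n+1)/2*2) := by rw [hdvd]; ring
      omega
    rw [e4, pow_add, pow_one, pow_mul]
  rw [lhs_eq, theta_eq, claim i]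
  ring

end Aux

/-- Entrywise form of the main theorem, case `j = 0`. -/
theorem entrywise_main_theorem_j_zero (q : ℂ) (hq : ‖q‖ < 1) (i : ℕ) :
    ∑' n : ℕ,
        qPoch (q ^ 8) (q ^ 16) n / qPoch (q ^ 16) (q ^ 16) n * q ^ (4 * n) *
          q ^ ((4 * n + 1) * (4 * i + 1)) =
      (∑' n : ℕ, q ^ ((2 * n + 1) ^ 2)) *
        (qPoch (q ^ 8) (q ^ 16) i / qPoch (q ^ 16) (q ^ 16) i) * q ^ (4 * i) := by
  refine entrywise_main_theorem_j_zero' q ?_ i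
  exact hq
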